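/- Let (h, [·,·], φ) be a regular Hom-Lie algebra over a field K. Consider the 2-term complex h → Der(h) with differential d = ad (d(u) = ad_u), the brackets l₂(D₁,D₂) = [D₁,D₂]_φ for D₁,D₂ ∈ Der(h) and l₂(D,u) = −l₂(u,D) = D(u) for D ∈ Der(h), u ∈ h, the maps φ₀ = Ad_φ on Der(h) and φ₁ = φ on h, and l₃ = 0. Then this data is a strict Hom-Lie 2-algebra; in particular, for all D, D₁, D₂, D₃ ∈ Der(h) and u, v ∈ h: (i) Ad_φ(ad_u) = ad_{φ(u)} (i.e. φ₀∘d = d∘φ₁); (ii) ad_{D(u)} = [D, ad_u]_φ and [ad_u, v] := l₂(d(u), v) equals l₂(u, d(v)) := −ad_v(u); (iii) Ad_φ([D₁,D₂]_φ) = [Ad_φ(D₁), Ad_φ(D₂)]_φ and φ(D(u)) = (Ad_φ(D))(φ(u)); (iv) [Ad_φ(D₁),[D₂,D₃]_φ]_φ + [Ad_φ(D₂),[D₃,D₁]_φ]_φ + [Ad_φ(D₃),[D₁,D₂]_φ]_φ = 0; (v) (Ad_φ(D₁))(D₂(u)) − (Ad_φ(D₂))(D₁(u)) − ([D₁,D₂]_φ)(φ(u))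 = 0. -/
import Mathlib


/-- `D` is a derivation of the Hom-Lie algebra `(h, br, φ)`. -/
def IsHomLieDer {K : Type*} [Field K] {h : Type*} [AddCommGroup h] [Module K h]
    (br : h →ₗ[K] h →ₗ[K] h) (φ : h ≃ₗ[K] h) (D : h →ₗ[K] h) : Prop :=
  ∀ x y : h,
    D (br x y) = br (φ x) (φ.symm (D (φ y))) + br (φ.symm (D (φ x))) (φ y)

/-- The bracket `[A,B]_φ = φ∘A∘φ⁻¹∘B∘φ⁻¹ − φ∘B∘φ⁻¹∘A∘φ⁻¹` on `gl(h)`. -/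
def glBr {K : Type*} [Field K] {h : Type*} [AddCommGroup h] [Module K h]
    (φ : h ≃ₗ[K] h) (A B : h →ₗ[K] h) : h →ₗ[K] h :=
  φ.toLinearMap ∘ₗ A ∘ₗ φ.symm.toLinearMap ∘ₗ B ∘ₗ φ.symm.toLinearMap
  - φ.toLinearMap ∘ₗ B ∘ₗ φ.symm.toLinearMap ∘ₗ A ∘ₗ φ.symm.toLinearMap

/-- The map `Ad_φ(A) = φ∘A∘φ⁻¹`. -/
def glAd {K : Type*} [Field K] {h : Type*} [AddCommGroup h] [Module K h]
    (φ : h ≃ₗ[K] h) (A : h →ₗ[K] h) : h →ₗ[K] h :=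
  φ.toLinearMap ∘ₗ A ∘ₗ φ.symm.toLinearMap

/-- The 2-term complex `h →(ad) Der(h)` with `l₂`, `φ₀ = Ad_φ`, `φ₁ = φ`, `l₃ = 0`
is a strict Hom-Lie 2-algebra (the derivation Hom-Lie 2-algebra `DER(h)`). -/
theorem stmt10 {K : Type*} [Field K] {h : Type*} [AddCommGroup h] [Module K h]
    (br : h →ₗ[K] h →ₗ[K] h) (φ : h ≃ₗ[K] h)
    (hskew : ∀ x y, br x y = - br y x)
    (hmul : ∀ x y, φ (br x y) = br (φ x) (φ y))
    (hjac : ∀ x y z,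
      br (φ x) (br y z) + br (φ y) (br z x) + br (φ z) (br x y) = 0) :
    -- (i) φ₀ ∘ d = d ∘ φ₁ : Ad_φ(ad_u) = ad_{φ(u)}
    (∀ u : h, glAd φ (br u) = br (φ u)) ∧
    -- (ii) d(l₂(D,u)) = l₂(D, d u) and l₂(d u, v) = l₂(u, d v)
    (∀ D : h →ₗ[K] h, IsHomLieDer br φ D →
      ∀ u : h, br (D u) = glBr φ D (br u)) ∧
    (∀ u v : h, br u v = - br v u) ∧
    -- (iii) φ₀, φ₁ preserve l₂
    (∀ D₁ D₂ : h →ₗ[K] h, IsHomLieDer br φ D₁ → IsHomLieDer br φ D₂ →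
      glAd φ (glBr φ D₁ D₂) = glBr φ (glAd φ D₁) (glAd φ D₂)) ∧
    (∀ D : h →ₗ[K] h, IsHomLieDer br φ D →
      ∀ u : h, φ (D u) = (glAd φ D) (φ u)) ∧
    -- (iv) Hom-Jacobi identity on Der(h)
    (∀ D₁ D₂ D₃ : h →ₗ[K] h, IsHomLieDer br φ D₁ → IsHomLieDer br φ D₂ →
      IsHomLieDer br φ D₃ →
      glBr φ (glAd φ D₁) (glBr φ D₂ D₃) + glBr φ (glAd φ D₂) (glBr φ D₃ D₁)
        + glBr φ (glAd φ D₃) (glBr φ D₁ D₂) = 0) ∧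
    -- (v) mixed Hom-Jacobi identity
    (∀ D₁ D₂ : h →ₗ[K] h, IsHomLieDer br φ D₁ → IsHomLieDer br φ D₂ →
      ∀ u : h,
        (glAd φ D₁) (D₂ u) - (glAd φ D₂) (D₁ u) - (glBr φ D₁ D₂) (φ u) = 0) := by

  have hmul' : ∀ x y : h, φ.symm (br x y) = br (φ.symm x) (φ.symm y) := by
    intro x y
    apply φ.injective
    simp [hmul]
  refine ⟨?_, ?_, hskew, ?_, ?_, ?_, ?_⟩
  · intro u
    ext v
    simp [glAd, hmul]
  · intro D hD u
    ext v
    simp only [glBr, LinearMap.sub_apply, LinearMap.coe_comp, Function.comp_apply,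
      LinearEquiv.coe_coe]
    rw [hmul' u (φ.symm v), hD (φ.symm u) (φ.symm (φ.symm v))]
    simp [hmul]
  · intro D₁ D₂ _ _
    ext v
    simp [glAd, glBr]
  · intro D _ u
    simp [glAd]
  · intro D₁ D₂ D₃ _ _ _
    ext v
    simp only [glBr, glAd, LinearMap.add_apply, LinearMap.sub_apply, LinearMap.coe_comp,
      Function.comp_apply, LinearEquiv.coe_coe, LinearEquiv.symm_apply_apply, map_sub,
      LinearMap.map_sub, LinearMap.zero_apply]
    abel
  · intro D₁ D₂ _ _ u
    simp [glAd, glBr]
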